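/- Let G = (V,E,w) be a connected weighted graph and T a maximum spanning tree of G. For any C ⊆ V such that C induces a connected subgraph in both G and T (i.e., C spans a single connected component of T), the minimum edge weight of the maximum spanning tree of the subgraph of G induced by C equals the minimum edge weight of the subtree of T induced by C, and the maximum weight of an edge of G leaving C equals the maximum weight of an edge of T leaving C. -/

import Mathlib

/-!
Everything rests on the exchange property of a maximum spanning tree `T` of `H`: if deleting
the tree edge `xy` separates the endpoints of an edge `ab` of `H`, then `T - xy + ab` is again a
spanning tree, so `w ab ≤ w xy`.

For an edge `ab` of `G` leaving `C`, the tree path from `a` to `b` leaves `C` through a tree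
edge `xy`; deleting `xy` separates `a` from `b`, so `xy` weighs at least `ab`, and the two maxima
agree. For the minima, if `xy` is an edge of one of the spanning trees `T_C`, `T[C]` of `G[C]`,
a path from `x` to `y` in the other one crosses the cut of the first tree minus `xy`, so by the
exchange property of the first tree (maximum in `G[C]`, resp. in `G`) the crossing edge weighs
at most `xy`.
-/

open scoped Classical
noncomputable section

namespace Bal

variable {V : Type*}

/-- Total weight of the edges of a graph. -/
def totalWeight {α : Type*} [Fintype α] (H : SimpleGraph α) (w : Sym2 α → ℝ) : ℝ :=
  ∑ e : Sym2 α, if e ∈ H.edgeSet then w e else 0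

/-- `T` is a maximum spanning tree of `G` w.r.t. the weight `w`. -/
def IsMaxSpanTree {α : Type*} [Fintype α] (G T : SimpleGraph α) (w : Sym2 α → ℝ) : Prop :=
  T ≤ G ∧ T.IsTree ∧
    ∀ T' : SimpleGraph α, T' ≤ G → T'.IsTree → totalWeight T' w ≤ totalWeight T w

/-- Weight function on the induced subgraph on `C`. -/
def subWeight (w : Sym2 V → ℝ) (C : Set V) : Sym2 C → ℝ :=
  fun e => w (e.map Subtype.val)

/-- Edges of `G` with exactly one endpoint in `C`. -/
def outEdges (G : SimpleGraph V) (C : Set V) : Set (Sym2 V) :=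
  {e | e ∈ G.edgeSet ∧ ∃ a b, e = s(a, b) ∧ a ∈ C ∧ b ∉ C}

/-- Edges of `G` with both endpoints in `C`. -/
def inEdges (G : SimpleGraph V) (C : Set V) : Set (Sym2 V) :=
  {e | e ∈ G.edgeSet ∧ ∀ x ∈ e, x ∈ C}

/-- `max(Out(C))`, with the convention `sSup ∅ = 0`. -/
def maxOut (G : SimpleGraph V) (w : Sym2 V → ℝ) (C : Set V) : ℝ :=
  sSup (w '' outEdges G C)

/-- `min(E(C))`, with the convention that it is `1` for singletons. -/
def minIn (G : SimpleGraph V) (w : Sym2 V → ℝ) (C : Set V) : ℝ :=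
  if C.Subsingleton then 1 else sInf (w '' inEdges G C)

/-- `min(MST(C))` : minimum weight of an edge of a maximum spanning tree of `G[C]`,
with the convention that it is `1` for singletons. -/
def minMST [Fintype V] (G : SimpleGraph V) (w : Sym2 V → ℝ) (C : Set V) : ℝ :=
  if C.Subsingleton then 1
  else if h : ∃ T : SimpleGraph C, IsMaxSpanTree (G.induce C) T (subWeight w C) then
    sInf (subWeight w C '' h.choose.edgeSet)
  else 1

/-- Quality measure of a cluster in a graph: `max(Out(C)) / min(MST(C))`. -/
def phi [Fintype V] (G : SimpleGraph V) (w : Sym2 V → ℝ) (C : Set V) : ℝ :=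
  maxOut G w C / minMST G w C

/-- Quality measure of a cluster in a tree: `max(Out(C)) / min(E(C))`. -/
def phiT (G : SimpleGraph V) (w : Sym2 V → ℝ) (C : Set V) : ℝ :=
  maxOut G w C / minIn G w C

/-- `𝒞` is a partition of `U ⊆ V` into `G`-connected parts. -/
def IsPartitionOn (G : SimpleGraph V) (U : Set V) (𝒞 : Set (Set V)) : Prop :=
  (∀ C ∈ 𝒞, C.Nonempty ∧ C ⊆ U ∧ (G.induce C).Connected) ∧
  (∀ C ∈ 𝒞, ∀ C' ∈ 𝒞, C ≠ C' → Disjoint C C') ∧ ⋃₀ 𝒞 = U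

/-- A `k`-clustering of a graph `G` on vertex set `V`. -/
def IsClustering (G : SimpleGraph V) (𝒞 : Set (Set V)) (k : ℕ) : Prop :=
  IsPartitionOn G Set.univ 𝒞 ∧ 𝒞.ncard = k

/-- Evaluation of a clustering of a graph (min-max quality measure, MST-based). -/
def eval [Fintype V] (G : SimpleGraph V) (w : Sym2 V → ℝ) (𝒞 : Set (Set V)) : ℝ :=
  sSup (phi G w '' 𝒞)

/-- Evaluation of a clustering of a tree. -/
def evalT (G : SimpleGraph V) (w : Sym2 V → ℝ) (𝒞 : Set (Set V)) : ℝ :=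
  sSup (phiT G w '' 𝒞)

/-- `𝒞` is an optimal `k`-clustering of `G`. -/
def IsOptimal [Fintype V] (G : SimpleGraph V) (w : Sym2 V → ℝ) (k : ℕ) (𝒞 : Set (Set V)) : Prop :=
  IsClustering G 𝒞 k ∧ ∀ 𝒟, IsClustering G 𝒟 k → eval G w 𝒞 ≤ eval G w 𝒟

/-- All edge weights lie in the open interval `(0,1)`. -/
def weightsOK (G : SimpleGraph V) (w : Sym2 V → ℝ) : Prop :=
  ∀ e ∈ G.edgeSet, 0 < w e ∧ w e < 1

/-- The set of connected components (as vertex sets) of a graph. -/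
def components (G : SimpleGraph V) : Set (Set V) :=
  {C | ∃ x : V, C = {y | G.Reachable x y}}

end Bal

namespace SimpleGraph

variable {α : Type*} {T : SimpleGraph α} {a b x y : α}

theorem Connected.reachable_deleteEdges_or (hT : T.Connected) (v : α) :
    (T.deleteEdges {s(x, y)}).Reachable v x ∨ (T.deleteEdges {s(x, y)}).Reachable v y := by
  set S := {z | (T.deleteEdges {s(x, y)}).Reachable z x ∨ (T.deleteEdges {s(x, y)}).Reachable z y}
  by_contra hv
  obtain ⟨d, -, hdS, hdS'⟩ := (hT.preconnected x v).some.exists_boundary_dart S (.inl .rfl) hv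
  apply hdS'
  by_cases hd : s(d.fst, d.snd) = s(x, y)
  · rcases Sym2.eq_iff.mp hd with ⟨-, h⟩ | ⟨-, h⟩
    · exact .inr (h ▸ .rfl)
    · exact .inl (h ▸ .rfl)
  · have hadj : (T.deleteEdges {s(x, y)}).Adj d.snd d.fst := by
      simpa [Sym2.eq_swap] using And.intro d.adj.symm hd
    exact hdS.imp hadj.reachable.trans hadj.reachable.trans

theorem Connected.deleteEdges_sup_edge (hT : T.Connected)
    (hab : ¬ (T.deleteEdges {s(x, y)}).Reachable a b) :
    (T.deleteEdges {s(x, y)} ⊔ edge a b).Connected := by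
  set D := T.deleteEdges {s(x, y)}
  have hDle : D ≤ D ⊔ edge a b := le_sup_left
  have hne : a ≠ b := fun h => hab (h ▸ .rfl)
  have hab' : (D ⊔ edge a b).Reachable a b :=
    (le_sup_right (a := D) <| (edge_adj a b a b).mpr ⟨.inl ⟨rfl, rfl⟩, hne⟩).reachable
  have hxy : (D ⊔ edge a b).Reachable x y := by
    rcases hT.reachable_deleteEdges_or a with ha | ha <;>
      rcases hT.reachable_deleteEdges_or b with hb | hb
    · exact absurd (ha.trans hb.symm) hab
    · exact ((ha.mono hDle).symm.trans hab').trans (hb.mono hDle)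
    · exact ((hb.mono hDle).symm.trans hab'.symm).trans (ha.mono hDle)
    · exact absurd (ha.trans hb.symm) hab
  refine (connected_iff_exists_forall_reachable _).mpr ⟨x, fun v => ?_⟩
  rcases hT.reachable_deleteEdges_or v with hv | hv
  · exact (hv.mono hDle).symm
  · exact hxy.trans (hv.mono hDle).symm

theorem IsTree.deleteEdges_sup_edge (hT : T.IsTree)
    (hab : ¬ (T.deleteEdges {s(x, y)}).Reachable a b) :
    (T.deleteEdges {s(x, y)} ⊔ edge a b).IsTree :=
  ⟨hT.connected.deleteEdges_sup_edge hab,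
    (hT.isAcyclic.anti (deleteEdges_le _)).sup_edge_of_not_reachable hab⟩

theorem IsAcyclic.not_reachable_deleteEdges_of_mem_edges (hT : T.IsAcyclic) {p : T.Walk a b}
    (hp : p.IsPath) (he : s(x, y) ∈ p.edges) : ¬ (T.deleteEdges {s(x, y)}).Reachable a b := by
  rw [reachable_deleteEdges_iff_exists_walk]
  rintro ⟨q, hq⟩
  have hpq := (hT.subsingleton_path a b).elim ⟨p, hp⟩ ⟨q.bypass, q.bypass_isPath⟩
  exact hq (q.edges_bypass_subset_edges (congrArg (·.val.edges) hpq ▸ he))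

end SimpleGraph

namespace Bal

open SimpleGraph

section

variable {α : Type*} [Fintype α] {H T : SimpleGraph α} {w : Sym2 α → ℝ} {a b x y : α}

theorem totalWeight_deleteEdges_sup_edge (hxy : T.Adj x y) (hab : ¬ T.Adj a b) (hne : a ≠ b) :
    totalWeight (T.deleteEdges {s(x, y)} ⊔ edge a b) w =
      totalWeight T w - w s(x, y) + w s(a, b) := by
  have hedges :
      (T.deleteEdges {s(x, y)} ⊔ edge a b).edgeSet = T.edgeSet \ {s(x, y)} ∪ {s(a, b)} := by
    rw [edgeSet_sup, edgeSet_deleteEdges, edgeSet_edge_of_ne hne]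
  have hsum : totalWeight (T.deleteEdges {s(x, y)} ⊔ edge a b) w + w s(x, y) =
      totalWeight T w + w s(a, b) := by
    unfold totalWeight
    rw [← Fintype.sum_ite_eq' s(x, y) w, ← Fintype.sum_ite_eq' s(a, b) w,
      ← Finset.sum_add_distrib, ← Finset.sum_add_distrib]
    refine Finset.sum_congr rfl fun e _ => ?_
    have hab' : s(a, b) ≠ s(x, y) := fun h => hab (by rwa [← mem_edgeSet, h])
    simp only [hedges, Set.mem_union, Set.mem_sdiff, Set.mem_singleton_iff]
    rcases eq_or_ne e s(x, y) with rfl | hex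
    · simp [hxy, hab'.symm]
    rcases eq_or_ne e s(a, b) with rfl | hea
    · simp [hab, hab']
    · simp [hex, hea]
  linarith

theorem IsMaxSpanTree.weight_le_of_not_reachable (hT : IsMaxSpanTree H T w) (hxy : T.Adj x y)
    (hab : H.Adj a b) (hsep : ¬ (T.deleteEdges {s(x, y)}).Reachable a b) :
    w s(a, b) ≤ w s(x, y) := by
  by_cases heq : s(a, b) = s(x, y)
  · rw [heq]
  have hnadj : ¬ T.Adj a b := fun h => hsep (deleteEdges_adj.mpr ⟨h, heq⟩).reachable
  have hle : T.deleteEdges {s(x, y)} ⊔ edge a b ≤ H :=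
    sup_le ((deleteEdges_le _).trans hT.1) ((edge_le_iff ..).mpr (.inr hab))
  have := hT.2.2 _ hle (hT.2.1.deleteEdges_sup_edge hsep)
  rw [totalWeight_deleteEdges_sup_edge hxy hnadj hab.ne] at this
  linarith

theorem IsMaxSpanTree.exists_mem_edges_weight_le (hT : IsMaxSpanTree H T w) (hxy : T.Adj x y)
    (p : H.Walk x y) : ∃ e ∈ p.edges, w e ≤ w s(x, y) := by
  have hbridge : ¬ (T.deleteEdges {s(x, y)}).Reachable x y :=
    isBridge_iff.mp (isAcyclic_iff_forall_adj_isBridge.mp hT.2.1.isAcyclic hxy)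
  obtain ⟨d, hd, hda, hdb⟩ :=
    p.exists_boundary_dart {z | (T.deleteEdges {s(x, y)}).Reachable x z} .rfl hbridge
  exact ⟨d.edge, List.mem_map_of_mem hd,
    hT.weight_le_of_not_reachable hxy d.adj fun h => hdb (hda.trans h)⟩

theorem IsMaxSpanTree.exists_adj_weight_le (hT : IsMaxSpanTree H T w) (hab : H.Adj a b)
    {C : Set α} (ha : a ∈ C) (hb : b ∉ C) :
    ∃ x y, T.Adj x y ∧ x ∈ C ∧ y ∉ C ∧ w s(a, b) ≤ w s(x, y) := by
  let p := (hT.2.1.connected.preconnected a b).some.bypass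
  obtain ⟨d, hd, hdC, hdC'⟩ := p.exists_boundary_dart C ha hb
  exact ⟨d.fst, d.snd, d.adj, hdC, hdC', hT.weight_le_of_not_reachable d.adj hab
    (hT.2.1.isAcyclic.not_reachable_deleteEdges_of_mem_edges (Walk.bypass_isPath _)
      (List.mem_map_of_mem hd))⟩

end

variable {V : Type*} {G T : SimpleGraph V} {w : Sym2 V → ℝ} {C : Set V}

theorem map_val_mem_inEdges {e : Sym2 C} (he : e ∈ (T.induce C).edgeSet) :
    e.map Subtype.val ∈ inEdges T C := by
  induction e using Sym2.ind with
  | _ u v => exact ⟨he, by simp⟩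

variable [Fintype V]

theorem IsMaxSpanTree.exists_mem_inEdges_weight_le {T_C : SimpleGraph C}
    (hTC : IsMaxSpanTree (G.induce C) T_C (subWeight w C)) (hTG : T ≤ G)
    (hCT : (T.induce C).Connected) {e : Sym2 C} (he : e ∈ T_C.edgeSet) :
    ∃ e' ∈ inEdges T C, w e' ≤ subWeight w C e := by
  induction e using Sym2.ind with
  | _ u v =>
    have hind : T.induce C ≤ G.induce C := fun _ _ h => hTG h
    let p := (hCT.preconnected u v).some.mapLe hind
    obtain ⟨e', he', hle⟩ := hTC.exists_mem_edges_weight_le he p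
    rw [Walk.edges_mapLe_eq_edges] at he'
    exact ⟨e'.map Subtype.val, map_val_mem_inEdges (Walk.edges_subset_edgeSet _ he'), hle⟩

theorem IsMaxSpanTree.exists_mem_edgeSet_weight_le (hT : IsMaxSpanTree G T w)
    {T_C : SimpleGraph C} (hTC : T_C ≤ G.induce C) (hconn : T_C.Connected) {e : Sym2 V}
    (he : e ∈ inEdges T C) : ∃ e' ∈ T_C.edgeSet, subWeight w C e' ≤ w e := by
  induction e using Sym2.ind with
  | _ x y =>
    have hx : x ∈ C := he.2 x (Sym2.mem_mk_left x y)
    have hy : y ∈ C := he.2 y (Sym2.mem_mk_right x y)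
    let p := (hconn.preconnected ⟨x, hx⟩ ⟨y, hy⟩).some.map
      ((Embedding.induce C).toHom.comp (Hom.ofLE hTC))
    obtain ⟨e', he', hle⟩ := hT.exists_mem_edges_weight_le he.1 p
    obtain ⟨e'', he'', rfl⟩ := List.mem_map.mp (Walk.edges_map _ _ ▸ he')
    exact ⟨e'', Walk.edges_subset_edgeSet _ he'', hle⟩

theorem IsMaxSpanTree.maxOut_eq (hT : IsMaxSpanTree G T w) (C : Set V) :
    maxOut G w C = maxOut T w C := by
  refine csSup_eq_csSup_of_forall_exists_le ?_ ?_
  · rintro _ ⟨_, ⟨he, a, b, rfl, ha, hb⟩, rfl⟩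
    obtain ⟨x, y, hxy, hx, hy, hle⟩ := hT.exists_adj_weight_le he ha hb
    exact ⟨w s(x, y), ⟨s(x, y), ⟨hxy, x, y, rfl, hx, hy⟩, rfl⟩, hle⟩
  · rintro _ ⟨e, ⟨he, hout⟩, rfl⟩
    exact ⟨w e, ⟨e, ⟨edgeSet_mono hT.1 he, hout⟩, rfl⟩, le_rfl⟩

theorem statement6_general {V : Type*} [Fintype V] (G : SimpleGraph V) (w : Sym2 V → ℝ)
    (T : SimpleGraph V) (hT : IsMaxSpanTree G T w)
    (C : Set V) (hCT : (T.induce C).Connected) :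
    (∀ T_C : SimpleGraph C, IsMaxSpanTree (G.induce C) T_C (subWeight w C) →
      sInf (subWeight w C '' T_C.edgeSet) = sInf (w '' inEdges T C)) ∧
    maxOut G w C = maxOut T w C := by
  refine ⟨fun T_C hTC => csInf_eq_csInf_of_forall_exists_le ?_ ?_, hT.maxOut_eq C⟩
  · rintro _ ⟨e, he, rfl⟩
    obtain ⟨e', he', hle⟩ := hTC.exists_mem_inEdges_weight_le hT.1 hCT he
    exact ⟨w e', ⟨e', he', rfl⟩, hle⟩
  · rintro _ ⟨e, he, rfl⟩
    obtain ⟨e', he', hle⟩ := hT.exists_mem_edgeSet_weight_le hTC.1 hTC.2.1.connected he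
    exact ⟨subWeight w C e', ⟨e', he', rfl⟩, hle⟩

/-- for `C` connected in both `G` and a maximum spanning tree `T`,
the min weight of a max spanning tree of `G[C]` equals the min weight of the induced
subtree of `T`, and the max outgoing weights agree. -/
theorem statement6 {V : Type*} [Fintype V] (G : SimpleGraph V) (w : Sym2 V → ℝ)
    (hconn : G.Connected) (T : SimpleGraph V) (hT : IsMaxSpanTree G T w)
    (C : Set V) (hCG : (G.induce C).Connected) (hCT : (T.induce C).Connected) :
    (∀ T_C : SimpleGraph C, IsMaxSpanTree (G.induce C) T_C (subWeight w C) →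
      sInf (subWeight w C '' T_C.edgeSet) = sInf (w '' inEdges T C)) ∧
    maxOut G w C = maxOut T w C :=
  statement6_general G w T hT C hCT

end Bal
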